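/- Let z ∈ ℤ⁴ with every component divisible by 4. Then the lossy backward transform introduces no error: 𝐿̃^{−1}(z) = L^{−1}·z, and in particular L^{−1}·z ∈ ℤ⁴. -/
import Mathlib


/-- Floor division by 2, modeling a one-bit right shift of a two's complement integer. -/
def rr (p : ℤ) : ℤ := ⌊(p : ℚ) / 2⌋

/-- The inverse ZFP transform matrix `L⁻¹`. -/
noncomputable def Linv : Matrix (Fin 4) (Fin 4) ℝ :=
  (1 / 4 : ℝ) • !![4, 6, -4, -1; 4, 2, 4, 5; 4, -2, 4, -5; 4, -6, -4, 1]

/-- The lossy backward transform `𝐿̃⁻¹ : ℤ⁴ → ℤ⁴` of ZFP, executed step by step. -/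
def LtildeInv (a : Fin 4 → ℤ) : Fin 4 → ℤ :=
  let a1 := a 0
  let a2 := a 1
  let a3 := a 2
  let a4 := a 3
  let a2 := a2 + rr a4
  let a4 := a4 - rr a2
  let a2 := a2 + a4
  let a4 := 2 * a4
  let a4 := a4 - a2
  let a3 := a3 + a1
  let a1 := 2 * a1
  let a1 := a1 - a3
  let a2 := a2 + a3
  let a3 := 2 * a3
  let a3 := a3 - a2
  let a4 := a4 + a1
  let a1 := 2 * a1
  let a1 := a1 - a4
  ![a1, a2, a3, a4]

lemma rr_two_mul (k : ℤ) : rr (2 * k) = k := by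
  unfold rr
  have h : ((2 * k : ℤ) : ℚ) / 2 = (k : ℚ) := by push_cast; ring
  rw [h, Int.floor_intCast]

/-- If every component of `z ∈ ℤ⁴` is divisible by 4, the lossy backward transform
introduces no error: `𝐿̃⁻¹(z) = L⁻¹·z`, and in particular `L⁻¹·z ∈ ℤ⁴`. -/
theorem ltildeInv_exact_of_four_dvd (z : Fin 4 → ℤ) (hz : ∀ i, (4 : ℤ) ∣ z i) :
    (∀ i, Linv.mulVec (fun j => (z j : ℝ)) i = ((LtildeInv z) i : ℝ)) ∧
    (∀ i, ∃ m : ℤ, Linv.mulVec (fun j => (z j : ℝ)) i = (m : ℝ)) := by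
  obtain ⟨a, ha⟩ := hz 0
  obtain ⟨b, hb⟩ := hz 1
  obtain ⟨c, hc⟩ := hz 2
  obtain ⟨d, hd⟩ := hz 3
  have h3 : rr (z 3) = 2 * d := by
    rw [hd, show (4 : ℤ) * d = 2 * (2 * d) by ring, rr_two_mul]
  have h2 : rr (z 1 + rr (z 3)) = 2 * b + d := by
    rw [hb, h3, show (4 : ℤ) * b + 2 * d = 2 * (2 * b + d) by ring, rr_two_mul]
  have hL : ∀ i, LtildeInv z i =
      ![4*a+6*b-4*c-d, 4*a+2*b+4*c+5*d, 4*a-2*b+4*c-5*d, 4*a-6*b-4*c+d] i := by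
    intro i
    simp only [LtildeInv]
    rw [h2, h3, ha, hb, hc, hd]
    fin_cases i <;> simp <;> ring
  have key : ∀ i, Linv.mulVec (fun j => (z j : ℝ)) i = ((LtildeInv z) i : ℝ) := by
    intro i
    rw [hL i]
    fin_cases i <;>
      simp [Linv, Matrix.mulVec, dotProduct, Fin.sum_univ_four, ha, hb, hc, hd] <;>
      push_cast <;> ring
  exact ⟨key, fun i => ⟨LtildeInv z i, key i⟩⟩
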